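/- Let D = ℝ² \ {(0, y) ∈ ℝ² : y ≥ 0} with the subspace topology. There exists a homeomorphism μ : ℝ² → D such that the map σ : C₀(ℝ², ℂ) → C₀(ℝ², ℂ), which sends f ∈ C₀(ℝ², ℂ) to the extension by zero to ℝ² of the function f ∘ μ⁻¹ : D → ℂ, is a *-homomorphism which is homotopic to the identity map of C₀(ℝ², ℂ); that is, there exists a *-homomorphism H : C₀(ℝ², ℂ) → C([0,1], C₀(ℝ², ℂ)) such that evaluation of H at 0 equals σ and evaluation of H at 1 equals the identity of C₀(ℝ², ℂ). -/

import Mathlib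

open Set
open scoped Classical
open scoped ZeroAtInfty

/-!
On the vertical line through `x` use the coordinate `d = √(y² + a) - y` with `a = x² + t`, the
positive root of `d² + 2yd = a`; its inverse is `y = (a - d²) / (2d)`, and it degenerates
(`d = 0`) exactly on the slit `x = 0, y ≥ 0` at time `t = 0`. In this coordinate the map
`G_t (x, y) = (x, y + (1 - t) / d)` becomes `(a - d²) / (2d) ↦ (a + 2(1 - t) - d²) / (2d)`, so
`G_0` is a homeomorphism of `D` onto `ℝ²` with an explicit inverse `μ`, while `G_1 = id`.
Sending the points with `d = 0` to `∞` turns `G` into a homotopy of self-maps of the one-point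
compactification of `ℝ²` fixing `∞`: continuity at `∞` comes from `‖G_t p‖ ≥ ‖p‖ - 1`, and at
the slit from `(1 - t) / d → ∞`. Composing with such a homotopy is a `*`-homomorphism
`C₀(ℝ²) → C([0,1], C₀(ℝ²))`.
-/

open Filter Topology OnePoint

namespace ZeroAtInftyContinuousMap

variable {X Y T 𝕜 β : Type*} [TopologicalSpace X] [TopologicalSpace Y] [R1Space Y]
  [TopologicalSpace T] [RCLike 𝕜] [SeminormedAddCommGroup β]

def toOnePoint : C₀(Y, 𝕜) →⋆ₙₐ[𝕜] C(OnePoint Y, 𝕜) where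
  toFun f := OnePoint.continuousMapMk f.toContinuousMap 0
    (coclosedCompact_eq_cocompact (X := Y) ▸ f.zero_at_infty')
  map_smul' c f := by ext w; induction w using OnePoint.rec <;> simp [continuousMapMk]
  map_zero' := by ext w; induction w using OnePoint.rec <;> simp [continuousMapMk]
  map_add' f g := by ext w; induction w using OnePoint.rec <;> simp [continuousMapMk]
  map_mul' f g := by ext w; induction w using OnePoint.rec <;> simp [continuousMapMk]
  map_star' f := by ext w; induction w using OnePoint.rec <;> simp [continuousMapMk]

@[simp]
lemma toOnePoint_apply_infty (f : C₀(Y, 𝕜)) : toOnePoint f ∞ = 0 := rfl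

@[simp]
lemma toOnePoint_apply_coe (f : C₀(Y, 𝕜)) (y : Y) : toOnePoint f y = f y := rfl

-- Subtracting `g ∞` makes this total and Lipschitz; when `g ∞ = 0` it is the restriction.
def ofOnePoint (g : C(OnePoint X, β)) : C₀(X, β) where
  toFun x := g x - g ∞
  continuous_toFun := (g.continuous.comp continuous_coe).sub continuous_const
  zero_at_infty' := by
    simpa using ((continuousAt_infty'.mp g.continuous.continuousAt).mono_left
      cocompact_le_coclosedCompact).sub_const (g ∞)

@[simp]
lemma ofOnePoint_apply (g : C(OnePoint X, β)) (x : X) : ofOnePoint g x = g x - g ∞ := rfl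

lemma lipschitzWith_ofOnePoint : LipschitzWith 2 (ofOnePoint : C(OnePoint X, β) → C₀(X, β)) := by
  refine LipschitzWith.of_dist_le_mul fun g₁ g₂ => ?_
  rw [← dist_toBCF_eq_dist, BoundedContinuousFunction.dist_le (by positivity)]
  intro x
  calc dist (g₁ x - g₁ ∞) (g₂ x - g₂ ∞) ≤ dist (g₁ x) (g₂ x) + dist (g₁ ∞) (g₂ ∞) :=
        dist_sub_sub_le _ _ _ _
    _ ≤ 2 * dist g₁ g₂ := by
        linarith [ContinuousMap.dist_apply_le_dist (f := g₁) (g := g₂) (x : OnePoint X),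
          ContinuousMap.dist_apply_le_dist (f := g₁) (g := g₂) ∞]

def compOnePoint (φ : C(OnePoint X, OnePoint Y)) (hφ : φ ∞ = ∞) :
    C₀(Y, 𝕜) →⋆ₙₐ[𝕜] C₀(X, 𝕜) where
  toFun f := ofOnePoint ((toOnePoint f).comp φ)
  map_smul' c f := by ext x; simp [hφ]
  map_zero' := by ext x; simp
  map_add' f g := by ext x; simp [hφ]
  map_mul' f g := by ext x; simp [hφ]
  map_star' f := by ext x; simp [hφ, map_star toOnePoint f]

lemma compOnePoint_apply (φ : C(OnePoint X, OnePoint Y)) (hφ : φ ∞ = ∞) (f : C₀(Y, 𝕜))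
    (x : X) : compOnePoint φ hφ f x = toOnePoint f (φ x) := by
  simp [compOnePoint, hφ]

def compOnePointFamily (Φ : C(T × OnePoint X, OnePoint Y)) (hΦ : ∀ t, Φ (t, ∞) = ∞) :
    C₀(Y, 𝕜) →⋆ₙₐ[𝕜] C(T, C₀(X, 𝕜)) where
  toFun f := ⟨fun t => compOnePoint (Φ.curry t) (hΦ t) f,
    lipschitzWith_ofOnePoint.continuous.comp ((toOnePoint f).comp Φ).curry.continuous⟩
  map_smul' c f := by ext t : 1; exact map_smul (compOnePoint (Φ.curry t) (hΦ t)) c f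
  map_zero' := by ext t : 1; exact map_zero (compOnePoint (Φ.curry t) (hΦ t))
  map_add' f g := by ext t : 1; exact map_add (compOnePoint (Φ.curry t) (hΦ t)) f g
  map_mul' f g := by ext t : 1; exact map_mul (compOnePoint (Φ.curry t) (hΦ t)) f g
  map_star' f := by ext t : 1; exact map_star (compOnePoint (Φ.curry t) (hΦ t)) f

lemma compOnePointFamily_apply_apply (Φ : C(T × OnePoint X, OnePoint Y))
    (hΦ : ∀ t, Φ (t, ∞) = ∞) (f : C₀(Y, 𝕜)) (t : T) (x : X) :
    compOnePointFamily Φ hΦ f t x = toOnePoint f (Φ (t, x)) :=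
  compOnePoint_apply (Φ.curry t) (hΦ t) f x

end ZeroAtInftyContinuousMap

namespace OnePoint

variable {T X Y : Type*} [TopologicalSpace T] [TopologicalSpace X] [TopologicalSpace Y]

def extendInfty (Ψ : T × X → OnePoint Y) (q : T × OnePoint X) : OnePoint Y :=
  q.2.elim ∞ fun x => Ψ (q.1, x)

lemma continuous_extendInfty {Ψ : T × X → OnePoint Y} (hΨ : Continuous Ψ)
    (hΨ_infty : ∀ t, Tendsto Ψ (𝓝 t ×ˢ coclosedCompact X) (𝓝 ∞)) :
    Continuous (extendInfty Ψ) := by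
  have hemb : IsOpenEmbedding (Prod.map id (↑) : T × X → T × OnePoint X) :=
    IsOpenEmbedding.id.prodMap isOpenEmbedding_coe
  refine continuous_iff_continuousAt.2 fun ⟨t, w⟩ => ?_
  induction w using OnePoint.rec with
  | infty =>
    rw [ContinuousAt, nhds_prod_eq, nhds_infty_eq, prod_sup, tendsto_sup, prod_map_right,
      tendsto_map'_iff, prod_pure, tendsto_map'_iff]
    exact ⟨hΨ_infty t, tendsto_const_nhds⟩
  | coe x => exact (hemb.continuousAt_iff (g := extendInfty Ψ) (x := (t, x))).mp hΨ.continuousAt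

lemma tendsto_ite_coe_nhds_infty {Z E : Type*} [NormedAddCommGroup E] [ProperSpace E]
    {l : Filter Z} {p : Z → Prop} [DecidablePred p] {g : Z → E}
    (hg : Tendsto (fun z => ‖g z‖) (l ⊓ 𝓟 {z | p z}) atTop) :
    Tendsto (fun z => if p z then (g z : OnePoint E) else ∞) l (𝓝 ∞) := by
  rw [tendsto_norm_atTop_iff_cobounded, Metric.cobounded_eq_cocompact,
    ← coclosedCompact_eq_cocompact] at hg
  exact (tendsto_coe_infty.comp hg).if tendsto_const_nhds

end OnePoint

noncomputable section

namespace SlitPlane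

variable {a d r y : ℝ}

def quadRoot (a y : ℝ) : ℝ := √(y ^ 2 + a) - y

def quadRootInv (a d : ℝ) : ℝ := (a - d ^ 2) / (2 * d)

lemma quadRoot_sq_add (h : 0 ≤ y ^ 2 + a) : quadRoot a y ^ 2 + 2 * y * quadRoot a y = a := by
  rw [quadRoot]; linear_combination Real.sq_sqrt h

lemma quadRootInv_quadRoot (ha : 0 ≤ a) (h : quadRoot a y ≠ 0) :
    quadRootInv a (quadRoot a y) = y := by
  rw [quadRootInv, div_eq_iff (mul_ne_zero two_ne_zero h)]
  linear_combination -quadRoot_sq_add (a := a) (y := y) (by positivity)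

lemma quadRoot_quadRootInv (hd : 0 < d) (h : 0 ≤ a + d ^ 2) :
    quadRoot a (quadRootInv a d) = d := by
  have hsq : quadRootInv a d ^ 2 + a = ((a + d ^ 2) / (2 * d)) ^ 2 := by
    rw [quadRootInv]; field_simp; ring
  rw [quadRoot, hsq, Real.sqrt_sq (by positivity), quadRootInv]
  field_simp
  ring

lemma quadRootInv_add_div (a r d : ℝ) : quadRootInv a d + r / d = quadRootInv (a + 2 * r) d := by
  rw [quadRootInv, quadRootInv]; ring

lemma neg_two_mul_le_quadRoot (ha : 0 ≤ a) (y : ℝ) : -2 * y ≤ quadRoot a y := by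
  have := Real.abs_le_sqrt (show y ^ 2 ≤ y ^ 2 + a by linarith)
  rw [quadRoot]; linarith [neg_le_abs y]

lemma quadRoot_nonneg (ha : 0 ≤ a) (y : ℝ) : 0 ≤ quadRoot a y := by
  have := Real.abs_le_sqrt (show y ^ 2 ≤ y ^ 2 + a by linarith)
  rw [quadRoot]; linarith [le_abs_self y]

lemma quadRoot_eq_zero_iff (ha : 0 ≤ a) : quadRoot a y = 0 ↔ a = 0 ∧ 0 ≤ y := by
  rw [quadRoot, sub_eq_zero]
  constructor
  · intro h
    have hy : 0 ≤ y := h ▸ Real.sqrt_nonneg _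
    have hsq := Real.sq_sqrt (show 0 ≤ y ^ 2 + a by positivity)
    rw [h] at hsq
    exact ⟨by linarith, hy⟩
  · rintro ⟨rfl, hy⟩
    rw [add_zero, Real.sqrt_sq hy]

lemma quadRoot_pos_iff (ha : 0 ≤ a) : 0 < quadRoot a y ↔ ¬(a = 0 ∧ 0 ≤ y) := by
  rw [← quadRoot_eq_zero_iff ha, (quadRoot_nonneg ha y).lt_iff_ne']

lemma quadRoot_pos (ha : 0 < a) (y : ℝ) : 0 < quadRoot a y :=
  (quadRoot_pos_iff ha.le).2 fun h => ha.ne' h.1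

lemma _root_.Continuous.quadRoot {Z : Type*} [TopologicalSpace Z] {a y : Z → ℝ}
    (ha : Continuous a) (hy : Continuous y) :
    Continuous fun z => SlitPlane.quadRoot (a z) (y z) := by
  unfold SlitPlane.quadRoot; fun_prop

def shift (a r y : ℝ) : ℝ := y + r / quadRoot a y

lemma shift_eq_quadRootInv (ha : 0 ≤ a) (h : quadRoot a y ≠ 0) :
    shift a r y = quadRootInv (a + 2 * r) (quadRoot a y) := by
  rw [← quadRootInv_add_div, quadRootInv_quadRoot ha h, shift]

lemma shift_quadRootInv_quadRoot (ha : 0 ≤ a) (hr : 0 < r) (y : ℝ) :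
    shift a r (quadRootInv a (quadRoot (a + 2 * r) y)) = y := by
  have hd : 0 < quadRoot (a + 2 * r) y := quadRoot_pos (by positivity) y
  rw [shift, quadRoot_quadRootInv hd (by positivity), quadRootInv_add_div,
    quadRootInv_quadRoot (by positivity) hd.ne']

lemma quadRootInv_quadRoot_shift (ha : 0 ≤ a) (hr : 0 ≤ r) (h : quadRoot a y ≠ 0) :
    quadRootInv a (quadRoot (a + 2 * r) (shift a r y)) = y := by
  have hd : 0 < quadRoot a y := (quadRoot_nonneg ha y).lt_of_ne' h
  rw [shift_eq_quadRootInv ha h, quadRoot_quadRootInv hd (by positivity),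
    quadRootInv_quadRoot ha h]

lemma abs_sub_one_le_abs_shift (ha : 0 ≤ a) (hr₀ : 0 ≤ r) (hr₁ : r ≤ 1) (y : ℝ) :
    |y| - 1 ≤ |shift a r y| := by
  have hq : 0 ≤ r / quadRoot a y := div_nonneg hr₀ (quadRoot_nonneg ha y)
  rcases le_or_gt (-1) y with hy | hy
  · rcases le_or_gt 0 y with hy₀ | hy₀
    · rw [abs_of_nonneg hy₀, shift, abs_of_nonneg (by linarith)]; linarith
    · linarith [abs_of_neg hy₀, abs_nonneg (shift a r y)]
  · have hq' : r / quadRoot a y ≤ 1 / 2 := by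
      have h2 : 2 ≤ quadRoot a y := by linarith [neg_two_mul_le_quadRoot ha y]
      calc r / quadRoot a y ≤ 1 / quadRoot a y := by gcongr
        _ ≤ 1 / 2 := by gcongr
    rw [abs_of_neg (by linarith), shift, abs_of_neg (by linarith)]; linarith

abbrev slitRoot (q : Icc (0 : ℝ) 1 × (ℝ × ℝ)) : ℝ := quadRoot (q.2.1 ^ 2 + q.1) q.2.2

def slitMap (q : Icc (0 : ℝ) 1 × (ℝ × ℝ)) : ℝ × ℝ :=
  (q.2.1, shift (q.2.1 ^ 2 + q.1) (1 - q.1) q.2.2)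

def slitHomotopy (q : Icc (0 : ℝ) 1 × (ℝ × ℝ)) : OnePoint (ℝ × ℝ) :=
  if 0 < slitRoot q then slitMap q else ∞

lemma slitRoot_nonneg (q : Icc (0 : ℝ) 1 × (ℝ × ℝ)) : 0 ≤ slitRoot q :=
  quadRoot_nonneg (by nlinarith [q.1.2.1]) _

lemma continuous_slitRoot : Continuous slitRoot :=
  Continuous.quadRoot (by fun_prop) (by fun_prop)

lemma norm_sub_one_le_norm_slitMap (q : Icc (0 : ℝ) 1 × (ℝ × ℝ)) :
    ‖q.2‖ - 1 ≤ ‖slitMap q‖ := by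
  obtain ⟨⟨t, ht₀, ht₁⟩, x, y⟩ := q
  have h := abs_sub_one_le_abs_shift (a := x ^ 2 + t) (r := 1 - t) (by positivity)
    (by linarith) (by linarith) y
  simp only [Prod.norm_def, slitMap, Real.norm_eq_abs]
  set s := shift (x ^ 2 + t) (1 - t) y
  exact sub_le_iff_le_add.2
    (max_le (by linarith [le_max_left |x| |s|]) (by linarith [le_max_right |x| |s|]))

lemma tendsto_slitHomotopy_cocompact (t : Icc (0 : ℝ) 1) :
    Tendsto slitHomotopy (𝓝 t ×ˢ coclosedCompact (ℝ × ℝ)) (𝓝 ∞) := by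
  refine tendsto_ite_coe_nhds_infty <| tendsto_atTop_mono norm_sub_one_le_norm_slitMap ?_
  rw [coclosedCompact_eq_cocompact]
  simpa [sub_eq_add_neg] using (tendsto_atTop_add_const_right _ (-1)
    (tendsto_norm_cocompact_atTop.comp tendsto_snd)).mono_left inf_le_left

lemma tendsto_slitHomotopy_of_slitRoot_eq_zero {q₀ : Icc (0 : ℝ) 1 × (ℝ × ℝ)}
    (h₀ : slitRoot q₀ = 0) : Tendsto slitHomotopy (𝓝 q₀) (𝓝 ∞) := by
  have ha := ((quadRoot_eq_zero_iff (by nlinarith [q₀.1.2.1])).1 h₀).1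
  have ht₀ : (q₀.1 : ℝ) = 0 := by nlinarith [q₀.1.2.1, sq_nonneg q₀.2.1]
  refine tendsto_ite_coe_nhds_infty ?_
  set l := 𝓝 q₀ ⊓ 𝓟 {q | 0 < slitRoot q}
  have hroot : Tendsto slitRoot l (𝓝[>] 0) := by
    have h := continuous_slitRoot.tendsto q₀
    rw [h₀] at h
    exact tendsto_nhdsWithin_iff.2
      ⟨h.mono_left inf_le_left, mem_inf_of_right (mem_principal_self _)⟩
  have hweight : Tendsto (fun q : Icc (0 : ℝ) 1 × (ℝ × ℝ) => 1 - (q.1 : ℝ)) l (𝓝 1) := by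
    have h := tendsto_const_nhds (x := (1 : ℝ)).sub
      ((continuous_subtype_val.comp continuous_fst).tendsto q₀)
    rw [Function.comp_apply, ht₀, sub_zero] at h
    exact h.mono_left inf_le_left
  have hy : Tendsto (fun q : Icc (0 : ℝ) 1 × (ℝ × ℝ) => q.2.2) l (𝓝 q₀.2.2) :=
    ((continuous_snd.comp continuous_snd).tendsto q₀).mono_left inf_le_left
  exact tendsto_atTop_mono (fun q => (le_abs_self _).trans (norm_snd_le (slitMap q)))
    (hy.add_atTop (hweight.pos_mul_atTop one_pos hroot.inv_tendsto_nhdsGT_zero))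

lemma continuousAt_slitMap {q₀ : Icc (0 : ℝ) 1 × (ℝ × ℝ)} (h₀ : slitRoot q₀ ≠ 0) :
    ContinuousAt slitMap q₀ :=
  (by fun_prop : ContinuousAt (fun q : Icc (0 : ℝ) 1 × (ℝ × ℝ) => q.2.1) q₀).prodMk
    ((by fun_prop : ContinuousAt (fun q : Icc (0 : ℝ) 1 × (ℝ × ℝ) => q.2.2) q₀).add
      ((by fun_prop : ContinuousAt (fun q : Icc (0 : ℝ) 1 × (ℝ × ℝ) => 1 - (q.1 : ℝ)) q₀).div
        continuous_slitRoot.continuousAt h₀))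

lemma continuous_slitHomotopy : Continuous slitHomotopy := by
  refine continuous_iff_continuousAt.2 fun q₀ => ?_
  rcases (slitRoot_nonneg q₀).eq_or_lt' with h₀ | h₀
  · rw [ContinuousAt, slitHomotopy, if_neg (not_lt.2 h₀.le)]
    exact tendsto_slitHomotopy_of_slitRoot_eq_zero h₀
  · refine (continuous_coe.continuousAt.comp (continuousAt_slitMap h₀.ne')).congr ?_
    filter_upwards [continuousAt_const.eventually_lt continuous_slitRoot.continuousAt h₀]
      with q hq
    simp [slitHomotopy, hq]

def slitHomotopyOnePoint : C(Icc (0 : ℝ) 1 × OnePoint (ℝ × ℝ), OnePoint (ℝ × ℝ)) :=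
  ⟨extendInfty slitHomotopy,
    continuous_extendInfty continuous_slitHomotopy tendsto_slitHomotopy_cocompact⟩

lemma slitHomotopyOnePoint_apply_infty (t : Icc (0 : ℝ) 1) :
    slitHomotopyOnePoint (t, ∞) = ∞ := rfl

lemma slitHomotopyOnePoint_apply_coe (t : Icc (0 : ℝ) 1) (z : ℝ × ℝ) :
    slitHomotopyOnePoint (t, z) = slitHomotopy (t, z) := rfl

abbrev slitPlane : Set (ℝ × ℝ) := {p | ¬(p.1 = 0 ∧ 0 ≤ p.2)}

lemma quadRoot_pos_iff_mem_slitPlane {p : ℝ × ℝ} :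
    0 < quadRoot (p.1 ^ 2) p.2 ↔ p ∈ slitPlane := by
  rw [quadRoot_pos_iff (sq_nonneg _), pow_eq_zero_iff two_ne_zero]; rfl

lemma quadRootInv_zero_neg (hd : 0 < d) : quadRootInv 0 d < 0 := by
  rw [quadRootInv]; exact div_neg_of_neg_of_pos (by nlinarith) (by positivity)

def slitHomeomorph : ℝ × ℝ ≃ₜ slitPlane where
  toFun p := ⟨(p.1, quadRootInv (p.1 ^ 2) (quadRoot (p.1 ^ 2 + 2) p.2)), by
    rintro ⟨hx, hy⟩
    rw [hx, zero_pow two_ne_zero] at hy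
    exact absurd hy (not_le.2 (quadRootInv_zero_neg (quadRoot_pos (by positivity) _)))⟩
  invFun q := (q.1.1, shift (q.1.1 ^ 2) 1 q.1.2)
  left_inv p := Prod.ext rfl <| by
    simpa using shift_quadRootInv_quadRoot (sq_nonneg p.1) one_pos p.2
  right_inv q := Subtype.ext <| Prod.ext rfl <| by
    simpa using quadRootInv_quadRoot_shift (sq_nonneg _) zero_le_one
      (quadRoot_pos_iff_mem_slitPlane.2 q.2).ne'
  continuous_toFun := by
    have hroot : Continuous fun p : ℝ × ℝ => quadRoot (p.1 ^ 2 + 2) p.2 :=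
      Continuous.quadRoot (by fun_prop) (by fun_prop)
    refine (continuous_fst.prodMk ?_).subtype_mk _
    exact ((continuous_fst.pow 2).sub (hroot.pow 2)).div (continuous_const.mul hroot)
      fun p => mul_ne_zero two_ne_zero (quadRoot_pos (by positivity) _).ne'
  continuous_invFun := by
    have hroot : Continuous fun q : slitPlane => quadRoot (q.1.1 ^ 2) q.1.2 :=
      Continuous.quadRoot (by fun_prop) (by fun_prop)
    exact (by fun_prop : Continuous fun q : slitPlane => q.1.1).prodMk
      ((by fun_prop : Continuous fun q : slitPlane => q.1.2).add
        (continuous_const.div hroot fun q => (quadRoot_pos_iff_mem_slitPlane.2 q.2).ne'))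

lemma slitHomotopy_zero (z : ℝ × ℝ) :
    slitHomotopy (⟨0, left_mem_Icc.2 zero_le_one⟩, z) =
      if h : z ∈ slitPlane then ((slitHomeomorph.symm ⟨z, h⟩ : ℝ × ℝ) : OnePoint (ℝ × ℝ))
      else ∞ := by
  by_cases h : z ∈ slitPlane
  · rw [dif_pos h, slitHomotopy,
      if_pos (by simpa [slitRoot] using quadRoot_pos_iff_mem_slitPlane.2 h)]
    simp [slitMap, slitHomeomorph]
  · rw [dif_neg h, slitHomotopy,
      if_neg (by simpa [slitRoot] using mt quadRoot_pos_iff_mem_slitPlane.1 h)]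

lemma slitHomotopy_one (z : ℝ × ℝ) :
    slitHomotopy (⟨1, right_mem_Icc.2 zero_le_one⟩, z) = z := by
  rw [slitHomotopy, if_pos (quadRoot_pos (by positivity) _)]
  simp [slitMap, shift]

end SlitPlane

end

open SlitPlane ZeroAtInftyContinuousMap in
theorem stmt_10 (D : Set (ℝ × ℝ)) (hD : D = {p : ℝ × ℝ | ¬(p.1 = 0 ∧ 0 ≤ p.2)}) :
    ∃ (μ : (ℝ × ℝ) ≃ₜ D) (σ : C₀(ℝ × ℝ, ℂ) →⋆ₙₐ[ℂ] C₀(ℝ × ℝ, ℂ)),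
      (∀ (f : C₀(ℝ × ℝ, ℂ)) (z : ℝ × ℝ),
        σ f z = if h : z ∈ D then f (μ.symm ⟨z, h⟩) else 0) ∧
      ∃ H : C₀(ℝ × ℝ, ℂ) →⋆ₙₐ[ℂ] C(Icc (0:ℝ) 1, C₀(ℝ × ℝ, ℂ)),
        (∀ f : C₀(ℝ × ℝ, ℂ), H f ⟨0, by norm_num⟩ = σ f) ∧
        (∀ f : C₀(ℝ × ℝ, ℂ), H f ⟨1, by norm_num⟩ = f) := by
  subst hD
  let H := compOnePointFamily (𝕜 := ℂ) slitHomotopyOnePoint slitHomotopyOnePoint_apply_infty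
  refine ⟨slitHomeomorph, compOnePoint (slitHomotopyOnePoint.curry ⟨0, by norm_num⟩)
    (slitHomotopyOnePoint_apply_infty ⟨0, by norm_num⟩), fun f z => ?_, H, fun f => rfl,
    fun f => ?_⟩
  · change H f ⟨0, by norm_num⟩ z = _
    rw [compOnePointFamily_apply_apply, slitHomotopyOnePoint_apply_coe, slitHomotopy_zero]
    split_ifs <;> rfl
  · ext z
    rw [compOnePointFamily_apply_apply, slitHomotopyOnePoint_apply_coe, slitHomotopy_one,
      toOnePoint_apply_coe]
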